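/- For ε ∈ (0,1) and α = ε/(1+ε), along solutions of Ẋ = -(1+ε)(Y-1)X, Ẏ = [X-1-ε(Y-1)]Y, the function V(X,Y) = Ψ(X) + (1+ε)Ψ(Y) + Π(X) + Ψ(Y/X^α) has derivative V̇ = -(X-1)(X^α - 1)/X^α - (1+ε)ε(Y-1)², which is negative for all (X,Y) ≠ (1,1) with X, Y > 0. -/

import Mathlib

/-!
Both partial derivatives of `V` are explicit rational expressions in `X`, `Y` and `X ^ α`; the
derivative of `Pi'` collapses to `(X - 1) / ((1 + ε) X X ^ α)` because `α (1 + ε) / ε = 1`.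
Multiplying by the vector field and using `α (1 + ε) = ε`, all mixed terms cancel and
`V̇ = -(X - 1)(X ^ α - 1) / X ^ α - (1 + ε) ε (Y - 1)²`. Since `x ↦ x ^ α` is increasing with
`1 ^ α = 1`, the factors `X - 1` and `X ^ α - 1` have the same sign, so both summands are
nonpositive, and they vanish together only at `(1, 1)`.
-/

noncomputable def Ψ (S : ℝ) : ℝ := S - 1 - Real.log S

noncomputable def Pi' (ε X : ℝ) : ℝ :=
  X ^ (-(ε / (1 + ε))) * (X - 1 - ((1 + ε) / ε) * (X ^ (ε / (1 + ε)) - 1))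

open Real

theorem hasDerivAt_rpow_const_of_ne_zero {x : ℝ} (hx : x ≠ 0) (α : ℝ) :
    HasDerivAt (fun x => x ^ α) (α * (x ^ α / x)) x := by
  simpa [rpow_sub_one hx] using hasDerivAt_rpow_const (p := α) (Or.inl hx)

theorem hasDerivAt_Ψ {p : ℝ} (hp : p ≠ 0) : HasDerivAt Ψ (1 - p⁻¹) p :=
  ((hasDerivAt_id p).sub_const 1).sub (hasDerivAt_log hp)

theorem hasDerivAt_Ψ_div_const {c y : ℝ} (hc : c ≠ 0) (hy : y ≠ 0) :
    HasDerivAt (fun y => Ψ (y / c)) ((y / c - 1) / y) y := by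
  refine ((hasDerivAt_Ψ (div_ne_zero hy hc)).comp y ((hasDerivAt_id y).div_const c)).congr_deriv ?_
  field_simp

theorem hasDerivAt_Ψ_div_rpow {α x y : ℝ} (hx : 0 < x) (hy : y ≠ 0) :
    HasDerivAt (fun x => Ψ (y / x ^ α)) (-α * (y / x ^ α - 1) / x) x := by
  have hxα : x ^ α ≠ 0 := (rpow_pos_of_pos hx α).ne'
  refine ((hasDerivAt_Ψ (div_ne_zero hy hxα)).comp x
    ((hasDerivAt_const x y).div (hasDerivAt_rpow_const_of_ne_zero hx.ne' α) hxα)).congr_deriv ?_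
  field_simp
  ring

theorem hasDerivAt_Pi' {ε x : ℝ} (hε : 0 < ε) (hx : 0 < x) :
    HasDerivAt (Pi' ε) ((x - 1) / ((1 + ε) * x * x ^ (ε / (1 + ε)))) x := by
  set α := ε / (1 + ε) with hα
  have hxα : x ^ α ≠ 0 := (rpow_pos_of_pos hx α).ne'
  refine ((hasDerivAt_rpow_const_of_ne_zero hx.ne' (-α)).mul (((hasDerivAt_id x).sub_const 1).sub
    (((hasDerivAt_rpow_const_of_ne_zero hx.ne' α).sub_const 1).const_mul ((1 + ε) / ε)))).congr_deriv ?_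
  have h1ε : 1 + ε ≠ 0 := by positivity
  simp only [Pi.sub_apply, id, rpow_neg hx.le, hα]
  field_simp
  ring

noncomputable def V (ε X Y : ℝ) : ℝ := Ψ X + (1 + ε) * Ψ Y + Pi' ε X + Ψ (Y / X ^ (ε / (1 + ε)))

theorem hasDerivAt_V_fst {ε X Y : ℝ} (hε : 0 < ε) (hX : 0 < X) (hY : Y ≠ 0) :
    HasDerivAt (fun x => V ε x Y)
      (1 - X⁻¹ + (X - 1) / ((1 + ε) * X * X ^ (ε / (1 + ε)))
        + -(ε / (1 + ε)) * (Y / X ^ (ε / (1 + ε)) - 1) / X) X :=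
  (((hasDerivAt_Ψ hX.ne').add_const _).add (hasDerivAt_Pi' hε hX)).add (hasDerivAt_Ψ_div_rpow hX hY)

theorem hasDerivAt_V_snd {ε X Y : ℝ} (hX : 0 < X) (hY : Y ≠ 0) :
    HasDerivAt (fun y => V ε X y)
      ((1 + ε) * (1 - Y⁻¹) + (Y / X ^ (ε / (1 + ε)) - 1) / Y) Y :=
  ((((hasDerivAt_Ψ hY).const_mul _).const_add _).add_const _).add
    (hasDerivAt_Ψ_div_const (rpow_pos_of_pos hX _).ne' hY)

theorem V_orbital_deriv {ε X Y : ℝ} (hε : 0 < ε) (hX : 0 < X) (hY : Y ≠ 0) :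
    deriv (fun x => V ε x Y) X * (-(1 + ε) * (Y - 1) * X)
      + deriv (fun y => V ε X y) Y * ((X - 1 - ε * (Y - 1)) * Y)
      = -(X - 1) * (X ^ (ε / (1 + ε)) - 1) / X ^ (ε / (1 + ε)) - (1 + ε) * ε * (Y - 1) ^ 2 := by
  rw [(hasDerivAt_V_fst hε hX hY).deriv, (hasDerivAt_V_snd hX hY).deriv]
  have h1ε : 1 + ε ≠ 0 := by positivity
  have hXα : X ^ (ε / (1 + ε)) ≠ 0 := (rpow_pos_of_pos hX _).ne'
  field_simp
  ring

theorem sub_one_mul_rpow_sub_one_pos {x α : ℝ} (hx : 0 < x) (hα : 0 < α) (hx1 : x ≠ 1) :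
    0 < (x - 1) * (x ^ α - 1) := by
  rcases hx1.lt_or_gt with hlt | hgt
  · exact mul_pos_of_neg_of_neg (by linarith) (by linarith [rpow_lt_one hx.le hlt hα])
  · exact mul_pos (by linarith) (by linarith [one_lt_rpow hgt hα])

theorem orbital_deriv_neg {ε X Y : ℝ} (hε : 0 < ε) (hX : 0 < X) (hXY : (X, Y) ≠ (1, 1)) :
    -(X - 1) * (X ^ (ε / (1 + ε)) - 1) / X ^ (ε / (1 + ε)) - (1 + ε) * ε * (Y - 1) ^ 2 < 0 := by
  have hXα : 0 < X ^ (ε / (1 + ε)) := rpow_pos_of_pos hX _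
  rw [neg_mul, neg_div, neg_sub_left, neg_lt_zero]
  by_cases hX1 : X = 1
  · have hY1 : Y - 1 ≠ 0 := sub_ne_zero.2 fun hY1 => hXY (by rw [hX1, hY1])
    simp only [hX1, sub_self, zero_mul, zero_div]
    positivity
  · have hpos := div_pos (sub_one_mul_rpow_sub_one_pos (α := ε / (1 + ε)) hX (by positivity) hX1) hXα
    exact add_pos_of_nonneg_of_pos (by positivity) hpos

theorem V_both_strict (ε X Y : ℝ) (hε : ε ∈ Set.Ioo (0:ℝ) 1) (hX : 0 < X) (hY : 0 < Y) :
    (deriv (fun x => Ψ x + (1 + ε) * Ψ Y + Pi' ε x + Ψ (Y / x ^ (ε / (1 + ε)))) X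
        * (-(1 + ε) * (Y - 1) * X)
      + deriv (fun y => Ψ X + (1 + ε) * Ψ y + Pi' ε X + Ψ (y / X ^ (ε / (1 + ε)))) Y
        * ((X - 1 - ε * (Y - 1)) * Y)
      = -(X - 1) * (X ^ (ε / (1 + ε)) - 1) / X ^ (ε / (1 + ε))
        - (1 + ε) * ε * (Y - 1) ^ 2)
    ∧ ((X, Y) ≠ (1, 1) →
        -(X - 1) * (X ^ (ε / (1 + ε)) - 1) / X ^ (ε / (1 + ε))
          - (1 + ε) * ε * (Y - 1) ^ 2 < 0) :=
  ⟨V_orbital_deriv hε.1 hX hY.ne', orbital_deriv_neg hε.1 hX⟩
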